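/- arXiv:2306.00181 — 2 statements merged into one kernel-verified Lean document; each statement's English description precedes it below -/
import Mathlib

section
/- Let E(x) = (1/2) xᵀ K x + ∑_i v(x[i]) on ℝ^d, with K symmetric positive semidefinite, and v twice differentiable with −γ ≤ v''(t) ≤ δ for all t and some γ, δ > 0. Let Ḡ be a co-isometry onto a subspace on which K acts with all eigenvalues ≥ λ₀ > γ and ≤ Λ. Then for every x₁, the conditional distribution p(x̄₁ | x₁) of x̄₁ = Ḡ x given x₁ = G x (for the Gibbs density p ∝ e^{−E}) is strongly log-concave: (λ₀ − γ) Id ⪯ −∇²_{x̄₁} log p(x̄₁ | x₁) ⪯ (Λ + δ) Id. -/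
/-!
Up to the constant `log Z + log m(x₁)`, the negative log conditional density is
`x̄ ↦ E(Gᵀx₁ + Ḡᵀx̄)`. Restricting to the line `t ↦ x + t w` reduces its Hessian to one-variable
calculus: the second derivative of `E` along `w` is `wᵀKw + ∑ᵢ v''(xᵢ) wᵢ²`. For `w = Ḡᵀu`
the first term is `uᵀ(ḠKḠᵀ)u ∈ [λ₀|u|², Λ|u|²]`, and since `ḠḠᵀ = 1` gives `|w| = |u|` the second
lies in `[-γ|u|², δ|u|²]`.
-/

open Matrix

theorem hasDerivAt_add_smul {E : Type*} [NormedAddCommGroup E] [NormedSpace ℝ E]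
    (x w : E) (t : ℝ) : HasDerivAt (fun t : ℝ => x + t • w) w t := by
  simpa using ((hasDerivAt_id t).smul_const w).const_add x

theorem deriv_deriv_eq_of_hasDerivAt {f f' : ℝ → ℝ} {c s : ℝ}
    (hf : ∀ t, HasDerivAt f (f' t) t) (hf' : HasDerivAt f' c s) : deriv (deriv f) s = c := by
  rw [show deriv f = f' from funext fun t => (hf t).deriv, hf'.deriv]

theorem fderiv_fderiv_apply_eq_deriv_deriv {E : Type*} [NormedAddCommGroup E] [NormedSpace ℝ E]
    {f : E → ℝ} (hf : ContDiff ℝ 2 f) (x u : E) :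
    fderiv ℝ (fun y => fderiv ℝ f y u) x u = deriv (deriv fun t : ℝ => f (x + t • u)) 0 := by
  have hdir : Differentiable ℝ (fun y => fderiv ℝ f y u) :=
    ((hf.fderiv_right (m := 1) (by norm_num)).clm_apply contDiff_const).differentiable
      (by norm_num)
  refine (deriv_deriv_eq_of_hasDerivAt (f' := fun t => fderiv ℝ f (x + t • u) u)
    (fun t => ((hf.differentiable (by norm_num)) _).hasFDerivAt.comp_hasDerivAt t
      (hasDerivAt_add_smul x u t)) ?_).symm
  have h := (hdir (x + (0 : ℝ) • u)).hasFDerivAt.comp_hasDerivAt (0 : ℝ)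
    (hasDerivAt_add_smul x u 0)
  rwa [zero_smul, add_zero] at h

theorem HasDerivAt.dotProduct {n : Type*} [Fintype n] {f g : ℝ → n → ℝ} {f' g' : n → ℝ} {t : ℝ}
    (hf : HasDerivAt f f' t) (hg : HasDerivAt g g' t) :
    HasDerivAt (fun s => f s ⬝ᵥ g s) (f' ⬝ᵥ g t + f t ⬝ᵥ g') t := by
  have h := HasDerivAt.fun_sum (u := Finset.univ) fun i _ =>
    (hasDerivAt_pi.1 hf i).fun_mul (hasDerivAt_pi.1 hg i)
  rwa [Finset.sum_add_distrib] at h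

theorem HasDerivAt.comp_pi {v v' : ℝ → ℝ} (hv : ∀ s, HasDerivAt v (v' s) s)
    {ι : Type*} {c : ℝ → ι → ℝ} {c' : ι → ℝ} {t : ℝ} (hc : HasDerivAt c c' t) :
    HasDerivAt (fun s i => v (c s i)) (fun i => v' (c t i) * c' i) t :=
  hasDerivAt_pi.2 fun i => (hv _).comp t (hasDerivAt_pi.1 hc i)

section

variable {n : Type*} [Fintype n]

theorem hasDerivAt_mulVec_add_smul {m : Type*} [Fintype m] (K : Matrix m n ℝ)
    (x w : n → ℝ) (t : ℝ) : HasDerivAt (fun t : ℝ => K *ᵥ (x + t • w)) (K *ᵥ w) t := by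
  simpa only [mulVec_add, mulVec_smul] using hasDerivAt_add_smul (K *ᵥ x) (K *ᵥ w) t

noncomputable def scalarPotentialEnergy (K : Matrix n n ℝ) (v : ℝ → ℝ) (x : n → ℝ) : ℝ :=
  1 / 2 * (x ⬝ᵥ K *ᵥ x) + ∑ i, v (x i)

theorem contDiff_scalarPotentialEnergy (K : Matrix n n ℝ) {v : ℝ → ℝ} (hv : ContDiff ℝ 2 v) :
    ContDiff ℝ 2 (scalarPotentialEnergy K v) := by
  unfold scalarPotentialEnergy mulVec dotProduct
  fun_prop

theorem deriv_deriv_scalarPotentialEnergy_line (K : Matrix n n ℝ) {v : ℝ → ℝ}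
    (hv : ContDiff ℝ 2 v) (x w : n → ℝ) :
    deriv (deriv fun t : ℝ => scalarPotentialEnergy K v (x + t • w)) 0
      = w ⬝ᵥ K *ᵥ w + ∑ i, deriv (deriv v) (x i) * w i ^ 2 := by
  have hv' : ∀ s, HasDerivAt v (deriv v s) s :=
    fun s => (hv.differentiable (by norm_num) s).hasDerivAt
  have hv'' : ∀ s, HasDerivAt (deriv v) (deriv (deriv v) s) s :=
    fun s => ((hv.iterate_deriv' 1 1).differentiable (by norm_num) s).hasDerivAt
  have hline := hasDerivAt_add_smul x w
  have hK := hasDerivAt_mulVec_add_smul K x w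
  refine deriv_deriv_eq_of_hasDerivAt (f' := fun t => 1 / 2 * (w ⬝ᵥ K *ᵥ (x + t • w)
      + (x + t • w) ⬝ᵥ K *ᵥ w) + (fun i => deriv v ((x + t • w) i)) ⬝ᵥ w)
    (fun t => ?_) ?_
  · exact ((hline t).dotProduct (hK t)).const_mul (1 / 2) |>.add <|
      HasDerivAt.fun_sum fun i _ => (hv' _).comp t (hasDerivAt_pi.1 (hline t) i)
  · have h := (((hasDerivAt_const 0 w).dotProduct (hK 0)).add
      ((hline 0).dotProduct (hasDerivAt_const 0 (K *ᵥ w)))).const_mul (1 / 2) |>.add <|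
      (HasDerivAt.comp_pi hv'' (hline 0)).dotProduct (hasDerivAt_const 0 w)
    refine h.congr_deriv ?_
    simp only [zero_smul, add_zero, zero_dotProduct, dotProduct_zero, zero_add]
    simp only [dotProduct, sq, mul_assoc]
    ring

theorem le_dotProduct_mulVec_of_posSemidef_sub [DecidableEq n] {A : Matrix n n ℝ} {c : ℝ}
    (h : (A - c • (1 : Matrix n n ℝ)).PosSemidef) (u : n → ℝ) :
    c * (u ⬝ᵥ u) ≤ u ⬝ᵥ A *ᵥ u := by
  have := h.dotProduct_mulVec_nonneg u
  simp only [star_trivial, sub_mulVec, smul_mulVec, one_mulVec, dotProduct_sub,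
    dotProduct_smul, smul_eq_mul] at this
  linarith

theorem dotProduct_mulVec_le_of_posSemidef_sub [DecidableEq n] {A : Matrix n n ℝ} {c : ℝ}
    (h : (c • (1 : Matrix n n ℝ) - A).PosSemidef) (u : n → ℝ) :
    u ⬝ᵥ A *ᵥ u ≤ c * (u ⬝ᵥ u) := by
  have := h.dotProduct_mulVec_nonneg u
  simp only [star_trivial, sub_mulVec, smul_mulVec, one_mulVec, dotProduct_sub,
    dotProduct_smul, smul_eq_mul] at this
  linarith

theorem mul_dotProduct_self_le_sum_mul_sq {c : n → ℝ} {a : ℝ} (hc : ∀ i, a ≤ c i)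
    (w : n → ℝ) : a * (w ⬝ᵥ w) ≤ ∑ i, c i * w i ^ 2 := by
  rw [dotProduct, Finset.mul_sum]
  exact Finset.sum_le_sum fun i _ => by
    rw [← sq]; exact mul_le_mul_of_nonneg_right (hc i) (sq_nonneg _)

theorem sum_mul_sq_le_mul_dotProduct_self {c : n → ℝ} {b : ℝ} (hc : ∀ i, c i ≤ b)
    (w : n → ℝ) : ∑ i, c i * w i ^ 2 ≤ b * (w ⬝ᵥ w) := by
  rw [dotProduct, Finset.mul_sum]
  exact Finset.sum_le_sum fun i _ => by
    rw [← sq]; exact mul_le_mul_of_nonneg_right (hc i) (sq_nonneg _)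

theorem transpose_mulVec_dotProduct_mulVec {m : Type*} [Fintype m] (B : Matrix m n ℝ)
    (K : Matrix n n ℝ) (u : m → ℝ) :
    (Bᵀ *ᵥ u) ⬝ᵥ K *ᵥ (Bᵀ *ᵥ u) = u ⬝ᵥ (B * K * Bᵀ) *ᵥ u := by
  rw [mulVec_mulVec, mulVec_transpose, dotProduct_mulVec, vecMul_vecMul, dotProduct_mulVec,
    Matrix.mul_assoc]

theorem transpose_mulVec_dotProduct_self {m : Type*} [Fintype m] [DecidableEq m]
    {B : Matrix m n ℝ} (hB : B * Bᵀ = 1) (u : m → ℝ) : (Bᵀ *ᵥ u) ⬝ᵥ (Bᵀ *ᵥ u) = u ⬝ᵥ u := by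
  rw [dotProduct_mulVec, mulVec_transpose, vecMul_vecMul, hB, vecMul_one]

theorem fderiv_fderiv_scalarPotentialEnergy_comp_affine {m : Type*} [Fintype m]
    (K : Matrix n n ℝ) {v : ℝ → ℝ} (hv : ContDiff ℝ 2 v) (a : n → ℝ) (B : Matrix n m ℝ)
    (z u : m → ℝ) :
    fderiv ℝ (fun y => fderiv ℝ (fun z => scalarPotentialEnergy K v (a + B *ᵥ z)) y u) z u
      = (B *ᵥ u) ⬝ᵥ K *ᵥ (B *ᵥ u)
        + ∑ i, deriv (deriv v) ((a + B *ᵥ z) i) * (B *ᵥ u) i ^ 2 := by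
  have hcd : ContDiff ℝ 2 fun z => scalarPotentialEnergy K v (a + B *ᵥ z) :=
    (contDiff_scalarPotentialEnergy K hv).comp (by unfold mulVec dotProduct; fun_prop)
  have hline : (fun t : ℝ => scalarPotentialEnergy K v (a + B *ᵥ (z + t • u)))
      = fun t => scalarPotentialEnergy K v ((a + B *ᵥ z) + t • (B *ᵥ u)) := by
    simp only [mulVec_add, mulVec_smul, add_assoc]
  rw [fderiv_fderiv_apply_eq_deriv_deriv hcd, hline, deriv_deriv_scalarPotentialEnergy_line K hv]

theorem log_inv_mul_exp_div {Z m : ℝ} (hZ : Z ≠ 0) (hm : m ≠ 0) (e : ℝ) :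
    Real.log (Z⁻¹ * Real.exp (-e) / m) = -Real.log Z - Real.log m - e := by
  rw [Real.log_div (by positivity) hm, Real.log_mul (inv_ne_zero hZ) (Real.exp_ne_zero _),
    Real.log_exp, Real.log_inv]
  ring

end

theorem conditional_strong_log_concavity_scalar_potential_general {d d₁ dbar : ℕ}
    (G : Matrix (Fin d₁) (Fin d) ℝ) (Gbar : Matrix (Fin dbar) (Fin d) ℝ)
    (hGbarGbar : Gbar * Gbarᵀ = 1) (K : Matrix (Fin d) (Fin d) ℝ)
    (v : ℝ → ℝ) (hv : ContDiff ℝ 2 v)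
    (γ δ lam₀ Lam : ℝ) (hv'' : ∀ t : ℝ, -γ ≤ deriv (deriv v) t ∧ deriv (deriv v) t ≤ δ)
    (hKlow : (Gbar * K * Gbarᵀ - lam₀ • (1 : Matrix (Fin dbar) (Fin dbar) ℝ)).PosSemidef)
    (hKup : (Lam • (1 : Matrix (Fin dbar) (Fin dbar) ℝ) - Gbar * K * Gbarᵀ).PosSemidef)
    (E : (Fin d → ℝ) → ℝ)
    (hE : ∀ x, E x = (1 / 2) * (x ⬝ᵥ K.mulVec x) + ∑ i, v (x i))
    (Z : ℝ) (hZ : 0 < Z)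
    (p : (Fin d → ℝ) → ℝ) (hp : ∀ x, p x = Z⁻¹ * Real.exp (-E x))
    (m : (Fin d₁ → ℝ) → ℝ)
    (hmpos : ∀ x₁, 0 < m x₁) :
    ∀ (x₁ : Fin d₁ → ℝ) (xb u : Fin dbar → ℝ),
      (lam₀ - γ) * (u ⬝ᵥ u)
          ≤ -(fderiv ℝ (fun yb => fderiv ℝ
                (fun zb => Real.log (p (Gᵀ.mulVec x₁ + Gbarᵀ.mulVec zb) / m x₁))
                yb u) xb u)
        ∧ -(fderiv ℝ (fun yb => fderiv ℝ
                (fun zb => Real.log (p (Gᵀ.mulVec x₁ + Gbarᵀ.mulVec zb) / m x₁))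
                yb u) xb u)
          ≤ (Lam + δ) * (u ⬝ᵥ u) := by
  intro x₁ xb u
  have hlog : (fun zb => Real.log (p (Gᵀ *ᵥ x₁ + Gbarᵀ *ᵥ zb) / m x₁))
      = fun zb => (-Real.log Z - Real.log (m x₁))
          - scalarPotentialEnergy K v (Gᵀ *ᵥ x₁ + Gbarᵀ *ᵥ zb) := by
    funext zb
    rw [hp, hE, log_inv_mul_exp_div hZ.ne' (hmpos x₁).ne']
    rfl
  have hhess : -(fderiv ℝ (fun yb => fderiv ℝ
        (fun zb => Real.log (p (Gᵀ *ᵥ x₁ + Gbarᵀ *ᵥ zb) / m x₁)) yb u) xb u)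
      = u ⬝ᵥ (Gbar * K * Gbarᵀ) *ᵥ u
        + ∑ i, deriv (deriv v) ((Gᵀ *ᵥ x₁ + Gbarᵀ *ᵥ xb) i) * (Gbarᵀ *ᵥ u) i ^ 2 := by
    simp only [hlog, fderiv_const_sub, FunLike.coe_neg, Pi.neg_apply, fderiv_fun_neg,
      neg_neg]
    rw [fderiv_fderiv_scalarPotentialEnergy_comp_affine K hv, transpose_mulVec_dotProduct_mulVec]
  have hvlow := mul_dotProduct_self_le_sum_mul_sq
    (fun i => (hv'' ((Gᵀ *ᵥ x₁ + Gbarᵀ *ᵥ xb) i)).1) (Gbarᵀ *ᵥ u)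
  have hvup := sum_mul_sq_le_mul_dotProduct_self
    (fun i => (hv'' ((Gᵀ *ᵥ x₁ + Gbarᵀ *ᵥ xb) i)).2) (Gbarᵀ *ᵥ u)
  rw [transpose_mulVec_dotProduct_self hGbarGbar] at hvlow hvup
  rw [hhess]
  exact ⟨by linarith [le_dotProduct_mulVec_of_posSemidef_sub hKlow u],
    by linarith [dotProduct_mulVec_le_of_posSemidef_sub hKup u]⟩

/-- Conditional strong log-concavity of scalar-potential Gibbs energies:
if `E(x) = (1/2)xᵀKx + ∑ᵢ v(x[i])` with `K` symmetric PSD, `-γ ≤ v'' ≤ δ`,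
and `Ḡ` is a co-isometry onto a subspace where `K` acts with eigenvalues in
`[λ₀, Λ]`, `λ₀ > γ`, then for every `x₁` the conditional distribution
`p(x̄₁|x₁)` of `x̄₁ = Ḡx` given `x₁ = Gx` under `p ∝ e^{-E}` satisfies
`(λ₀-γ) Id ⪯ -∇²_{x̄₁} log p(x̄₁|x₁) ⪯ (Λ+δ) Id`, i.e. for every direction `u`
the second directional derivative of the negative log conditional density is
between `(λ₀-γ)‖u‖²` and `(Λ+δ)‖u‖²`. -/
theorem conditional_strong_log_concavity_scalar_potential {d d₁ dbar : ℕ}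
    (G : Matrix (Fin d₁) (Fin d) ℝ) (Gbar : Matrix (Fin dbar) (Fin d) ℝ)
    (horth : Gᵀ * G + Gbarᵀ * Gbar = 1) (hGGbar : G * Gbarᵀ = 0)
    (hGG : G * Gᵀ = 1) (hGbarGbar : Gbar * Gbarᵀ = 1)
    (K : Matrix (Fin d) (Fin d) ℝ) (hK : K.PosSemidef)
    (v : ℝ → ℝ) (hv : ContDiff ℝ 2 v)
    (γ δ lam₀ Lam : ℝ) (hγ : 0 < γ) (hδ : 0 < δ) (hlam₀ : γ < lam₀)
    (hv'' : ∀ t : ℝ, -γ ≤ deriv (deriv v) t ∧ deriv (deriv v) t ≤ δ)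
    (hKlow : (Gbar * K * Gbarᵀ - lam₀ • (1 : Matrix (Fin dbar) (Fin dbar) ℝ)).PosSemidef)
    (hKup : (Lam • (1 : Matrix (Fin dbar) (Fin dbar) ℝ) - Gbar * K * Gbarᵀ).PosSemidef)
    (E : (Fin d → ℝ) → ℝ)
    (hE : ∀ x, E x = (1 / 2) * (x ⬝ᵥ K.mulVec x) + ∑ i, v (x i))
    (Z : ℝ) (hZ : 0 < Z)
    (p : (Fin d → ℝ) → ℝ) (hp : ∀ x, p x = Z⁻¹ * Real.exp (-E x))
    (m : (Fin d₁ → ℝ) → ℝ)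
    (hm : ∀ x₁, m x₁ = ∫ xb : Fin dbar → ℝ, p (Gᵀ.mulVec x₁ + Gbarᵀ.mulVec xb))
    (hmpos : ∀ x₁, 0 < m x₁) :
    ∀ (x₁ : Fin d₁ → ℝ) (xb u : Fin dbar → ℝ),
      (lam₀ - γ) * (u ⬝ᵥ u)
          ≤ -(fderiv ℝ (fun yb => fderiv ℝ
                (fun zb => Real.log (p (Gᵀ.mulVec x₁ + Gbarᵀ.mulVec zb) / m x₁))
                yb u) xb u)
        ∧ -(fderiv ℝ (fun yb => fderiv ℝ
                (fun zb => Real.log (p (Gᵀ.mulVec x₁ + Gbarᵀ.mulVec zb) / m x₁))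
                yb u) xb u)
          ≤ (Lam + δ) * (u ⬝ᵥ u) :=
  conditional_strong_log_concavity_scalar_potential_general G Gbar hGbarGbar K v hv γ δ lam₀ Lam
    hv'' hKlow hKup E hE Z hZ p hp m hmpos
end

section
/- Let q(y) = Z⁻¹ exp(−E(y)) be a smooth probability density on ℝ^{d̄} and let E_θ be a smooth parametric energy. Then the Fisher divergence objective ℓ(θ) = (1/2) 𝔼_{y∼q}[‖∇ log q(y) + ∇E_θ(y)‖²] satisfies ℓ(θ) = 𝔼_{y∼q}[(1/2)‖∇E_θ(y)‖² − ΔE_θ(y)] + c, where c = (1/2)𝔼_{y∼q}[‖∇ log q(y)‖²] does not depend on θ, provided q and E_θ are smooth and q(y) ∇E_θ(y) → 0 at infinity. -/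
open MeasureTheory

section HyvarinenAux

open Filter Set ENNReal

lemma hyvarinen_aux_slice_integrable {n : ℕ} (D : (Fin (n+1) → ℝ) → ℝ) (hDint : Integrable D)
    (i : Fin (n+1)) :
    Integrable (fun p : ℝ × (Fin n → ℝ) => D (i.insertNth p.1 p.2)) := by
  have h := (measurePreserving_piFinSuccAbove (fun _ : Fin (n+1) => (volume : Measure ℝ)) i).symm
  rw [show (volume : Measure (Fin (n+1) → ℝ)) = Measure.pi (fun _ => volume) from rfl,
    ← h.integrable_comp_emb (MeasurableEquiv.measurableEmbedding _)] at hDint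
  simp only [MeasurableEquiv.piFinSuccAbove_symm_apply, Fin.insertNthEquiv, Function.comp_def] at hDint
  exact hDint

lemma hyvarinen_aux_div_zero {n : ℕ} (G : Fin (n+1) → (Fin (n+1) → ℝ) → ℝ)
    (G' : Fin (n+1) → (Fin (n+1) → ℝ) → ((Fin (n+1) → ℝ) →L[ℝ] ℝ))
    (hG : ∀ i x, HasFDerivAt (G i) (G' i x) x)
    (hdiv : Integrable (fun x => ∑ i, G' i x (Pi.single i 1)))
    (D : (Fin (n+1) → ℝ) → ℝ) (hDnn : ∀ x, 0 ≤ D x)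
    (hDint : Integrable D) (hbound : ∀ i x, |G i x| ≤ D x) :
    ∫ x, ∑ i, G' i x (Pi.single i 1) = 0 := by
  classical
  have hGc : ∀ i, Continuous (G i) :=
    fun i => Differentiable.continuous (fun x => (hG i x).differentiableAt)
  set f : (Fin (n+1) → ℝ) → ℝ := fun x => ∑ i, G' i x (Pi.single i 1) with hf
  set M : Fin (n+1) → ℝ → ℝ := fun i t => ∫ y : Fin n → ℝ, D (i.insertNth t y) with hM
  have hMint : ∀ i, Integrable (M i) := fun i =>
    (hyvarinen_aux_slice_integrable D hDint i).integral_prod_left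
  have hMnn : ∀ i t, 0 ≤ M i t := fun i t => integral_nonneg (fun y => hDnn _)
  have hgood : ∀ᵐ t : ℝ, ∀ i : Fin (n+1),
      Integrable (fun y : Fin n → ℝ => D (i.insertNth t y)) := by
    rw [ae_all_iff]
    exact fun i => (hyvarinen_aux_slice_integrable D hDint i).prod_right_ae
  have hgood' : ∀ᵐ t : ℝ, ∀ i : Fin (n+1),
      Integrable (fun y : Fin n → ℝ => D (i.insertNth (-t) y)) :=
    (Measure.measurePreserving_neg (volume : Measure ℝ)).quasiMeasurePreserving.ae hgood
  set h : ℝ → ℝ := fun t => ∑ i, (M i t + M i (-t)) with hh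
  have hMnegint : ∀ i, Integrable (fun t => M i (-t)) := fun i => (hMint i).comp_neg
  have hhint : Integrable h := integrable_finset_sum _ fun i _ => (hMint i).add (hMnegint i)
  have hhnn : ∀ t, 0 ≤ h t := fun t =>
    Finset.sum_nonneg fun i _ => add_nonneg (hMnn i t) (hMnn i (-t))
  have key : ∀ t : ℝ, 0 < t →
      (∀ i : Fin (n+1), Integrable (fun y : Fin n → ℝ => D (i.insertNth t y))) →
      (∀ i : Fin (n+1), Integrable (fun y : Fin n → ℝ => D (i.insertNth (-t) y))) →
      |∫ x in Icc (fun _ => -t) (fun _ => t : Fin (n+1) → ℝ), f x| ≤ h t := by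
    intro t ht hsl hsl'
    have hle : (fun _ => -t : Fin (n+1) → ℝ) ≤ fun _ => t :=
      fun _ => show -t ≤ t by linarith
    have hdivthm := integral_divergence_of_hasFDerivAt_off_countable'
      (fun _ => -t) (fun _ => t) hle G G' ∅ Set.countable_empty
      (fun i => (hGc i).continuousOn)
      (fun x _ i => hG i x)
      (hdiv.integrableOn)
    rw [hdivthm]
    rw [hh]
    refine (Finset.abs_sum_le_sum_abs _ _).trans (Finset.sum_le_sum fun i _ => ?_)
    have hface : ∀ (r : ℝ), Integrable (fun y : Fin n → ℝ => D (i.insertNth r y)) →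
        |∫ y in Icc ((fun _ => -t) ∘ i.succAbove) ((fun _ => t) ∘ i.succAbove),
          G i (i.insertNth r y)| ≤ M i r := by
      intro r hr
      have h1 : |∫ y in Icc ((fun _ => -t) ∘ i.succAbove) ((fun _ => t) ∘ i.succAbove),
          G i (i.insertNth r y)| ≤ ∫ y in Icc ((fun _ => -t) ∘ i.succAbove)
          ((fun _ => t) ∘ i.succAbove), |G i (i.insertNth r y)| := by
        simpa [Real.norm_eq_abs] using norm_integral_le_integral_norm
          (μ := volume.restrict (Icc ((fun _ => -t) ∘ i.succAbove) ((fun _ => t) ∘ i.succAbove)))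
          (fun y : Fin n → ℝ => G i (i.insertNth r y))
      refine h1.trans ?_
      have hins : Continuous (fun y : Fin n → ℝ => (i.insertNth r y : Fin (n+1) → ℝ)) :=
        (continuous_const.finInsertNth i continuous_id)
      have h2 : ∫ y in Icc ((fun _ => -t) ∘ i.succAbove) ((fun _ => t) ∘ i.succAbove),
          |G i (i.insertNth r y)| ≤ ∫ y in Icc ((fun _ => -t) ∘ i.succAbove)
          ((fun _ => t) ∘ i.succAbove), D (i.insertNth r y) := by
        refine setIntegral_mono_on ?_ ?_ measurableSet_Icc fun y _ => hbound i _
        · exact (((hGc i).comp hins).abs).continuousOn.integrableOn_Icc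
        · exact hr.integrableOn
      refine h2.trans ?_
      exact setIntegral_le_integral hr (Filter.Eventually.of_forall fun y => hDnn _)
    calc |(∫ y in Icc ((fun _ => -t) ∘ i.succAbove) ((fun _ => t) ∘ i.succAbove),
            G i (i.insertNth ((fun _ => t : Fin (n+1) → ℝ) i) y)) -
          ∫ y in Icc ((fun _ => -t) ∘ i.succAbove) ((fun _ => t) ∘ i.succAbove),
            G i (i.insertNth ((fun _ => -t : Fin (n+1) → ℝ) i) y)|
        ≤ |∫ y in Icc ((fun _ => -t) ∘ i.succAbove) ((fun _ => t) ∘ i.succAbove),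
            G i (i.insertNth t y)| +
          |∫ y in Icc ((fun _ => -t) ∘ i.succAbove) ((fun _ => t) ∘ i.succAbove),
            G i (i.insertNth (-t) y)| := abs_sub _ _
      _ ≤ M i t + M i (-t) := add_le_add (hface t (hsl i)) (hface (-t) (hsl' i))
  have tends : Tendsto (fun t : ℝ => ∫ x in Icc (fun _ => -t) (fun _ => t : Fin (n+1) → ℝ), f x)
      atTop (nhds (∫ x, f x)) := by
    simp_rw [← integral_indicator measurableSet_Icc]
    refine tendsto_integral_filter_of_dominated_convergence (fun x => |f x|)
      (Eventually.of_forall fun t => (hdiv.aestronglyMeasurable).indicator measurableSet_Icc)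
      (Eventually.of_forall fun t => Eventually.of_forall fun x => ?_) hdiv.abs
      (Eventually.of_forall fun x => ?_)
    · simpa [Real.norm_eq_abs] using
        norm_indicator_le_norm_self (s := Icc (fun _ => -t) (fun _ => t)) f x
    · refine tendsto_const_nhds.congr' ?_
      filter_upwards [eventually_ge_atTop (∑ i, |x i|)] with t hT
      have hx : x ∈ Icc (fun _ => -t) (fun _ => t : Fin (n+1) → ℝ) := by
        constructor <;> intro j
        · have : |x j| ≤ t := le_trans (Finset.single_le_sum (f := fun j => |x j|)
            (fun _ _ => abs_nonneg _) (Finset.mem_univ j)) hT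
          have := abs_le.1 this
          simpa using this.1
        · have : |x j| ≤ t := le_trans (Finset.single_le_sum (f := fun j => |x j|)
            (fun _ _ => abs_nonneg _) (Finset.mem_univ j)) hT
          exact (abs_le.1 this).2
      exact (Set.indicator_of_mem hx f).symm
  have hex : ∀ k : ℕ, ∃ t : ℝ, t > k ∧
      |∫ x in Icc (fun _ => -t) (fun _ => t : Fin (n+1) → ℝ), f x| ≤ h t ∧
      h t < 1/(k+1) := by
    intro k
    have hε : (0:ℝ) < 1/(k+1) := by positivity
    have hA : volume {t : ℝ | 1/(k+1) ≤ h t} < ⊤ := hhint.measure_ge_lt_top hε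
    set B : Set ℝ := Ioi (max (k:ℝ) 0) \ {t : ℝ | 1/(k+1) ≤ h t} with hB
    have hBne : volume B ≠ 0 := by
      intro h0
      have : volume (Ioi (max (k:ℝ) 0)) ≤ volume B + volume {t : ℝ | 1/(k+1) ≤ h t} := by
        refine (measure_mono (fun t ht => ?_)).trans (measure_union_le _ _)
        by_cases hc : t ∈ {t : ℝ | 1/(k+1) ≤ h t}
        · exact Or.inr hc
        · exact Or.inl ⟨ht, hc⟩
      rw [h0, zero_add, Real.volume_Ioi] at this
      exact (lt_irrefl _ (lt_of_le_of_lt this hA)).elim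
    obtain ⟨t, htB, htgood⟩ := MeasureTheory.Measure.exists_mem_of_measure_ne_zero_of_ae hBne
      (ae_restrict_of_ae (hgood.and hgood'))
    refine ⟨t, lt_of_le_of_lt (le_max_left _ _) htB.1, ?_, not_le.1 htB.2⟩
    exact key t (lt_of_le_of_lt (le_max_right _ _) htB.1) htgood.1 htgood.2
  choose R hR1 hR2 hR3 using hex
  have hRtend : Tendsto R atTop atTop :=
    tendsto_atTop_mono (fun k => (hR1 k).le) tendsto_natCast_atTop_atTop
  have hlim1 : Tendsto (fun k => ∫ x in Icc (fun _ => -(R k)) (fun _ => R k : Fin (n+1) → ℝ), f x)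
      atTop (nhds (∫ x, f x)) := tends.comp hRtend
  have hlim2 : Tendsto (fun k => ∫ x in Icc (fun _ => -(R k)) (fun _ => R k : Fin (n+1) → ℝ), f x)
      atTop (nhds 0) := by
    refine squeeze_zero_norm (fun k => ?_) tendsto_one_div_add_atTop_nhds_zero_nat
    calc ‖∫ x in Icc (fun _ => -(R k)) (fun _ => R k : Fin (n+1) → ℝ), f x‖
        = |∫ x in Icc (fun _ => -(R k)) (fun _ => R k : Fin (n+1) → ℝ), f x| := Real.norm_eq_abs _
      _ ≤ h (R k) := hR2 k
      _ ≤ 1/(k+1) := (hR3 k).le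
  exact tendsto_nhds_unique hlim1 hlim2

end HyvarinenAux

/-- Hyvärinen's integration-by-parts identity for score matching: for a smooth
Gibbs density `q = Z⁻¹e^{-E}` and a smooth parametric energy `F = E_θ`, the
Fisher divergence objective
`ℓ(θ) = (1/2)𝔼_q[‖∇log q + ∇F‖²]` satisfies
`ℓ(θ) = 𝔼_q[(1/2)‖∇F‖² - ΔF] + (1/2)𝔼_q[‖∇log q‖²]`, provided
`q·∇F → 0` at infinity.  Gradients and Laplacians are expressed through
directional derivatives along the coordinate directions. -/
theorem hyvarinen_score_matching_identity {dbar : ℕ}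
    (E : (Fin dbar → ℝ) → ℝ) (hE : ContDiff ℝ (⊤ : ℕ∞) E)
    (Z : ℝ) (hZ : 0 < Z)
    (q : (Fin dbar → ℝ) → ℝ) (hq : ∀ y, q y = Z⁻¹ * Real.exp (-E y))
    (hqprob : ∫ y, q y = 1)
    (F : (Fin dbar → ℝ) → ℝ) (hF : ContDiff ℝ 2 F)
    -- decay at infinity of q·∇F:
    (hdecay : Filter.Tendsto
      (fun y => q y * Real.sqrt (∑ i, (fderiv ℝ F y (Pi.single i 1)) ^ 2))
      (Filter.cocompact (Fin dbar → ℝ)) (nhds 0))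
    -- integrability of the three expectations involved:
    (hint₁ : Integrable fun y => q y *
      ∑ i, (fderiv ℝ (fun z => Real.log (q z)) y (Pi.single i 1)
        + fderiv ℝ F y (Pi.single i 1)) ^ 2)
    (hint₂ : Integrable fun y => q y *
      ((1 / 2) * ∑ i, (fderiv ℝ F y (Pi.single i 1)) ^ 2
        - ∑ i, fderiv ℝ (fun z => fderiv ℝ F z (Pi.single i 1)) y (Pi.single i 1)))
    (hint₃ : Integrable fun y => q y *
      ∑ i, (fderiv ℝ (fun z => Real.log (q z)) y (Pi.single i 1)) ^ 2) :
    (1 / 2) * ∫ y, q y *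
        ∑ i, (fderiv ℝ (fun z => Real.log (q z)) y (Pi.single i 1)
          + fderiv ℝ F y (Pi.single i 1)) ^ 2
      = (∫ y, q y *
          ((1 / 2) * ∑ i, (fderiv ℝ F y (Pi.single i 1)) ^ 2
            - ∑ i, fderiv ℝ (fun z => fderiv ℝ F z (Pi.single i 1)) y
                (Pi.single i 1)))
        + (1 / 2) * ∫ y, q y *
            ∑ i, (fderiv ℝ (fun z => Real.log (q z)) y (Pi.single i 1)) ^ 2 := by
  classical
  -- abbreviations (as plain functions to keep syntactic match)
  set a : Fin dbar → (Fin dbar → ℝ) → ℝ :=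
    fun i y => fderiv ℝ (fun z => Real.log (q z)) y (Pi.single i 1) with ha_def
  set b : Fin dbar → (Fin dbar → ℝ) → ℝ :=
    fun i y => fderiv ℝ F y (Pi.single i 1) with hb_def
  set L : Fin dbar → (Fin dbar → ℝ) → ℝ :=
    fun i y => fderiv ℝ (fun z => fderiv ℝ F z (Pi.single i 1)) y (Pi.single i 1) with hL_def
  -- basic facts about q
  have hqe : q = fun z => Z⁻¹ * Real.exp (-E z) := funext hq
  have hqpos : ∀ y, 0 < q y := fun y => by
    rw [hq]; positivity
  have hqc : Continuous q := by
    rw [hqe]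
    exact continuous_const.mul ((hE.continuous.neg).rexp)
  have hqint : Integrable q := by
    by_contra hni
    rw [integral_undef hni] at hqprob
    exact one_ne_zero hqprob.symm
  -- derivative of log q
  have ha : ∀ (y v : Fin dbar → ℝ),
      fderiv ℝ (fun z => Real.log (q z)) y v = -(fderiv ℝ E y v) := by
    intro y v
    have h1 : (fun z => Real.log (q z)) = fun z => Real.log Z⁻¹ + -(E z) := by
      funext z
      rw [hq, Real.log_mul (inv_ne_zero hZ.ne') (Real.exp_ne_zero _), Real.log_exp]
    rw [h1, fderiv_const_add, fderiv_fun_neg, ContinuousLinearMap.neg_apply]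
  -- derivative of q
  have hqd : ∀ y : Fin dbar → ℝ,
      HasFDerivAt q (Z⁻¹ • (Real.exp (-E y) • (-(fderiv ℝ E y)))) y := by
    intro y
    rw [hqe]
    exact (((hE.differentiable (by simp) y).hasFDerivAt.neg).exp).const_mul Z⁻¹
  -- smoothness of the partial derivatives of F
  have hB : ∀ i : Fin dbar, ContDiff ℝ 1 (fun y => fderiv ℝ F y (Pi.single i 1)) :=
    fun i => (hF.fderiv_right (by norm_num)).clm_apply contDiff_const
  have hBc : ∀ i, Continuous (b i) := fun i => (hB i).continuous
  have hac : ∀ i, Continuous (a i) := by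
    intro i
    have : a i = fun y => -(fderiv ℝ E y (Pi.single i 1)) := by
      funext y; rw [ha_def]; exact ha y _
    rw [this]
    have : ContDiff ℝ 1 (fun y => fderiv ℝ E y (Pi.single i 1)) :=
      (hE.fderiv_right (WithTop.coe_le_coe.mpr le_top)).clm_apply contDiff_const
    exact this.continuous.neg
  -- pointwise sums
  set A : (Fin dbar → ℝ) → ℝ := fun y => ∑ i, (a i y)^2 with hA_def
  set Bs : (Fin dbar → ℝ) → ℝ := fun y => ∑ i, (b i y)^2 with hBs_def
  set ABs : (Fin dbar → ℝ) → ℝ := fun y => ∑ i, a i y * b i y with hABs_def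
  set Lap : (Fin dbar → ℝ) → ℝ := fun y => ∑ i, L i y with hLap_def
  have hexp : ∀ y, (∑ i, (a i y + b i y)^2) = A y + 2 * ABs y + Bs y := by
    intro y
    rw [hA_def, hBs_def, hABs_def]
    rw [Finset.mul_sum, ← Finset.sum_add_distrib, ← Finset.sum_add_distrib]
    exact Finset.sum_congr rfl fun i _ => by ring
  have hBsnn : ∀ y, 0 ≤ Bs y := fun y => Finset.sum_nonneg fun i _ => sq_nonneg _
  -- integrabilities
  have hb2 : ∀ y, Bs y ≤ 2*(∑ i, (a i y + b i y)^2) + 2*A y := by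
    intro y
    rw [hBs_def, hA_def]
    have hterm : ∀ i : Fin dbar, (b i y)^2 ≤ 2*(a i y + b i y)^2 + 2*(a i y)^2 := by
      intro i; nlinarith [sq_nonneg (2 * a i y + b i y)]
    calc (∑ i, (b i y)^2) ≤ ∑ i, (2*(a i y + b i y)^2 + 2*(a i y)^2) :=
          Finset.sum_le_sum fun i _ => hterm i
      _ = 2*(∑ i, (a i y + b i y)^2) + 2*∑ i, (a i y)^2 := by
          rw [Finset.sum_add_distrib, Finset.mul_sum, Finset.mul_sum]
  have hcontqBs : Continuous (fun y => q y * Bs y) :=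
    hqc.mul (continuous_finset_sum _ fun i _ => ((hBc i).pow 2))
  have hiBs : Integrable (fun y => q y * Bs y) := by
    refine Integrable.mono' ((hint₁.const_mul 2).add (hint₃.const_mul 2))
      hcontqBs.aestronglyMeasurable (Filter.Eventually.of_forall fun y => ?_)
    have h0 : 0 ≤ q y * Bs y := mul_nonneg (hqpos y).le (hBsnn y)
    rw [Real.norm_eq_abs, abs_of_nonneg h0]
    calc q y * Bs y ≤ q y * (2*(∑ i, (a i y + b i y)^2) + 2*A y) :=
          mul_le_mul_of_nonneg_left (hb2 y) (hqpos y).le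
      _ = 2 * (q y * ∑ i, (a i y + b i y)^2) + 2 * (q y * A y) := by ring
  have hiA : Integrable (fun y => q y * A y) := hint₃
  have hiAB : Integrable (fun y => q y * ABs y) := by
    have heq : (fun y => q y * ABs y) = fun y =>
        (1/2) * ((q y * ∑ i, (a i y + b i y)^2) - q y * A y - q y * Bs y) := by
      funext y
      rw [hexp y]; ring
    rw [heq]
    exact ((hint₁.sub hiA).sub hiBs).const_mul (1/2)
  have hiLap : Integrable (fun y => q y * Lap y) := by
    have heq : (fun y => q y * Lap y) = fun y =>
        (1/2) * (q y * Bs y) - q y * ((1/2) * Bs y - Lap y) := by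
      funext y; ring
    rw [heq]
    exact (hiBs.const_mul (1/2)).sub hint₂
  -- the divergence identity : ∫ (q·ABs + q·Lap) = 0
  have hdivzero : ∫ y, (q y * ABs y + q y * Lap y) = 0 := by
    rcases dbar with _ | n
    · simp [hABs_def, hLap_def]
    · -- vector field G i = q * b i
      set G : Fin (n+1) → (Fin (n+1) → ℝ) → ℝ := fun i y => q y * b i y with hG_def
      set G' : Fin (n+1) → (Fin (n+1) → ℝ) → ((Fin (n+1) → ℝ) →L[ℝ] ℝ) := fun i y =>
        q y • fderiv ℝ (fun z => fderiv ℝ F z (Pi.single i 1)) y +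
          b i y • (Z⁻¹ • (Real.exp (-E y) • (-(fderiv ℝ E y)))) with hG'_def
      have hGd : ∀ i x, HasFDerivAt (G i) (G' i x) x := by
        intro i x
        exact (hqd x).mul (((hB i).differentiable one_ne_zero x).hasFDerivAt)
      have hG'val : ∀ i y, G' i y (Pi.single i 1) = q y * L i y + q y * (a i y * b i y) := by
        intro i y
        rw [hG'_def]
        simp only [ContinuousLinearMap.add_apply, ContinuousLinearMap.smul_apply,
          ContinuousLinearMap.neg_apply, smul_eq_mul]
        have : a i y = -(fderiv ℝ E y (Pi.single i 1)) := ha y _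
        rw [hL_def]
        rw [hq y]
        ring_nf
        rw [this]
        ring
      have hdivval : (fun y => ∑ i, G' i y (Pi.single i 1)) =
          fun y => q y * ABs y + q y * Lap y := by
        funext y
        rw [hABs_def, hLap_def]
        rw [Finset.sum_congr rfl fun i _ => hG'val i y]
        rw [Finset.sum_add_distrib, Finset.mul_sum, Finset.mul_sum]
        ring
      have hdivint : Integrable (fun y => ∑ i, G' i y (Pi.single i 1)) := by
        rw [hdivval]; exact hiAB.add hiLap
      have hres := hyvarinen_aux_div_zero G G' hGd hdivint
        (fun y => (q y + q y * Bs y)/2)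
        (fun y => div_nonneg (add_nonneg (hqpos y).le
          (mul_nonneg (hqpos y).le (hBsnn y))) (by norm_num))
        ((hqint.add hiBs).div_const 2)
        (fun i y => ?_)
      · rw [hdivval] at hres
        exact hres
      · -- |G i y| ≤ (q y + q y * Bs y)/2
        rw [hG_def]
        have h1 : |q y * b i y| = q y * |b i y| := by
          rw [abs_mul, abs_of_nonneg (hqpos y).le]
        rw [h1]
        have h2 : (b i y)^2 ≤ Bs y := by
          rw [hBs_def]
          exact Finset.single_le_sum (f := fun j => (b j y)^2)
            (fun j _ => sq_nonneg _) (Finset.mem_univ i)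
        have h3 : |b i y| ≤ (1 + Bs y)/2 := by
          nlinarith [sq_abs (b i y), sq_nonneg (|b i y| - 1)]
        calc q y * |b i y| ≤ q y * ((1 + Bs y)/2) :=
              mul_le_mul_of_nonneg_left h3 (hqpos y).le
          _ = (q y + q y * Bs y)/2 := by ring
  -- split ∫ qABs + ∫ qLap = 0
  have hsplit : (∫ y, q y * ABs y) + (∫ y, q y * Lap y) = 0 := by
    rw [← integral_add hiAB hiLap]; exact hdivzero
  -- rewrite both sides
  have hlhs : (∫ y, q y * ∑ i, (a i y + b i y)^2)
      = (∫ y, q y * A y) + 2 * (∫ y, q y * ABs y) + (∫ y, q y * Bs y) := by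
    have heq : (fun y => q y * ∑ i, (a i y + b i y)^2)
        = fun y => (q y * A y + 2 * (q y * ABs y)) + q y * Bs y := by
      funext y; rw [hexp y]; ring
    rw [heq]
    have h1 : Integrable (fun y => q y * A y + 2 * (q y * ABs y)) :=
      hiA.add (hiAB.const_mul 2)
    have e1 : ∫ y, ((q y * A y + 2 * (q y * ABs y)) + q y * Bs y)
        = (∫ y, (q y * A y + 2 * (q y * ABs y))) + ∫ y, q y * Bs y :=
      integral_add h1 hiBs
    have e2 : ∫ y, (q y * A y + 2 * (q y * ABs y))
        = (∫ y, q y * A y) + ∫ y, 2 * (q y * ABs y) :=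
      integral_add hiA (hiAB.const_mul 2)
    have e3 : ∫ y, 2 * (q y * ABs y) = 2 * ∫ y, q y * ABs y :=
      integral_const_mul 2 _
    rw [e1, e2, e3]
  have hrhs : (∫ y, q y * ((1/2) * Bs y - Lap y))
      = (1/2) * (∫ y, q y * Bs y) - (∫ y, q y * Lap y) := by
    have heq : (fun y => q y * ((1/2) * Bs y - Lap y))
        = fun y => (1/2) * (q y * Bs y) - q y * Lap y := by
      funext y; ring
    rw [heq, integral_sub (hiBs.const_mul (1/2)) hiLap, integral_const_mul]
  -- final algebra
  show (1/2) * (∫ y, q y * ∑ i, (a i y + b i y)^2)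
      = (∫ y, q y * ((1/2) * Bs y - Lap y)) + (1/2) * (∫ y, q y * A y)
  rw [hlhs, hrhs]
  linarith [hsplit]
end
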